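/- Let R be a commutative domain of characteristic zero and δ : R → R a derivation. Then the differential polynomial ring R[x;id_R,δ] is a simple ring if and only if R is δ-simple and R is a maximal commutative subring of R[x;id_R,δ]. -/

import Mathlib

/-!
Write the elements of `S = R[x;δ]` as `Σ aᵢ xⁱ`. Then `x s - s x = Σ δ(aᵢ) xⁱ`, and by the
Leibniz rule `xᵐ r = Σ (m choose k) δᵏ(r) xᵐ⁻ᵏ`, if `s` has degree `n + 1` then the coefficient
of `xⁿ` in `s r - r s` is `(n + 1) aₙ₊₁ δ(r)` (for commutative `R`).

If `S` is simple, a `δ`-invariant ideal `J` of `R` gives the ideal of `S` of elements with all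
coefficients in `J`, so `J` is `0` or `R`. An element of positive degree commuting with `R`
would force `δ = 0`, as `R` is a domain of characteristic zero; then `x` is a nonzero central
non-unit, impossible since the center of a simple ring is a field.

Conversely, let `I ≠ 0` be an ideal of `S` and `n` the least degree of its nonzero elements.
The coefficients of `xⁿ` of the elements of `I` of degree `≤ n` form a nonzero `δ`-invariant
ideal of `R`, so `I` contains some `u` of degree `n` with leading coefficient `1`. Then each
`r u - u r ∈ I` has degree `< n`, so it vanishes; by maximal commutativity `u ∈ R`, so `u = 1`.
-/

/-- `δ` is a `σ`-derivation of `R`: it is additive and satisfies the twisted Leibniz rule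
`δ(ab) = σ(a)δ(b) + δ(a)b`. -/
def IsSigmaDerivation {R : Type*} [Ring R] (σ : R →+* R) (δ : R → R) : Prop :=
  (∀ a b : R, δ (a + b) = δ a + δ b) ∧ ∀ a b : R, δ (a * b) = σ a * δ b + δ a * b

/-- `S`, together with the ring morphism `f : R →+* S` and the element `x : S`, is an Ore
extension `R[x;σ,δ]`: the powers `1, x, x², …` form a basis of `S` as a left `R`-module
(i.e. every element of `S` is, in a unique way, a finite sum `Σᵢ f(aᵢ) xⁱ`), and the
commutation rule `x·r = σ(r)·x + δ(r)` holds for all `r ∈ R`. -/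
structure IsOreExtension {R S : Type*} [Ring R] [Ring S]
    (σ : R →+* R) (δ : R → R) (f : R →+* S) (x : S) : Prop where
  basis : Function.Bijective fun a : ℕ →₀ R => a.sum fun i r => f r * x ^ i
  rel : ∀ r : R, x * f r = f (σ r) * x + f (δ r)

/-- `R` is `σ`-`δ`-simple: the only two-sided ideals `J` of `R` with `σ(J) ⊆ J` and
`δ(J) ⊆ J` are `{0}` and `R`. -/
def IsSigmaDeltaSimple {R : Type*} [Ring R] (σ : R →+* R) (δ : R → R) : Prop :=
  ∀ J : TwoSidedIdeal R, (∀ a ∈ J, σ a ∈ J) → (∀ a ∈ J, δ a ∈ J) → J = ⊥ ∨ J = ⊤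

/-- `R` is `δ`-simple: the only two-sided ideals `J` of `R` with `δ(J) ⊆ J` are `{0}`
and `R`. -/
def IsDeltaSimple {R : Type*} [Ring R] (δ : R → R) : Prop :=
  ∀ J : TwoSidedIdeal R, (∀ a ∈ J, δ a ∈ J) → J = ⊥ ∨ J = ⊤

open Finset

theorem Finsupp.exists_apply_ne_zero_forall_lt {M : Type*} [Zero M] (a : ℕ →₀ M) (ha : a ≠ 0) :
    ∃ n, a n ≠ 0 ∧ ∀ i, n < i → a i = 0 := by
  have hne : a.support.Nonempty := Finsupp.support_nonempty_iff.mpr ha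
  refine ⟨a.support.max' hne, Finsupp.mem_support_iff.mp (a.support.max'_mem hne), ?_⟩
  intro i hi
  by_contra h
  exact (a.support.le_max' i (Finsupp.mem_support_iff.mpr h)).not_gt hi

namespace IsOreExtension

section Coordinates

variable {R S : Type*} [Ring R] [Ring S] {σ : R →+* R} {δ : R → R} {f : R →+* S} {x : S}
  (hS : IsOreExtension σ δ f x)

noncomputable def repr : S ≃+ (ℕ →₀ R) :=
  (AddEquiv.ofBijective
    (Finsupp.liftAddHom fun i => (AddMonoidHom.mulRight (x ^ i)).comp f.toAddMonoidHom)
    hS.basis).symm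

theorem repr_symm_apply (a : ℕ →₀ R) : hS.repr.symm a = a.sum fun i r => f r * x ^ i := rfl

theorem repr_f_mul_x_pow (r : R) (i : ℕ) : hS.repr (f r * x ^ i) = Finsupp.single i r := by
  rw [← AddEquiv.eq_symm_apply]
  simp [repr_symm_apply]

theorem repr_f (r : R) : hS.repr (f r) = Finsupp.single 0 r := by
  simpa using hS.repr_f_mul_x_pow r 0

theorem repr_one : hS.repr 1 = Finsupp.single 0 1 := by
  rw [← f.map_one, repr_f]

include hS in
theorem f_injective : Function.Injective f := fun r t h =>
  Finsupp.single_injective 0 <| by simpa [repr_f] using congrArg hS.repr h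

include hS in
theorem delta_zero : δ 0 = 0 := by
  have := hS.rel 0
  simp only [map_zero, mul_zero, zero_mul, zero_add] at this
  exact hS.f_injective (by rw [← this, map_zero])

theorem repr_f_mul (r : R) (s : S) : hS.repr (f r * s) = r • hS.repr s := by
  rw [← AddEquiv.eq_symm_apply, repr_symm_apply, Finsupp.sum_smul_index (by simp)]
  conv_lhs => rw [← hS.repr.symm_apply_apply s, repr_symm_apply, Finsupp.mul_sum]
  simp only [map_mul, mul_assoc]

theorem repr_mul_x (s : S) : hS.repr (s * x) = (hS.repr s).mapDomain Nat.succ := by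
  rw [← AddEquiv.eq_symm_apply, repr_symm_apply,
    Finsupp.sum_mapDomain_index_inj Nat.succ_injective]
  conv_lhs => rw [← hS.repr.symm_apply_apply s, repr_symm_apply, Finsupp.sum_mul]
  simp only [pow_succ, mul_assoc]

include hS in
theorem x_ne_zero [Nontrivial R] : x ≠ 0 := fun h => by
  have := hS.repr_mul_x 1
  simp only [h, mul_zero, map_zero, repr_one, Finsupp.mapDomain_single] at this
  exact Finsupp.single_ne_zero.mpr one_ne_zero this.symm

theorem f_repr_apply_zero {s : S} (hs : ∀ i, 0 < i → hS.repr s i = 0) : f (hS.repr s 0) = s := by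
  refine hS.repr.injective ?_
  ext (_ | i)
  · simp [repr_f]
  · simp [repr_f, hs]

include hS in
theorem mul_x_ne_one [Nontrivial R] (s : S) : s * x ≠ 1 := by
  intro h
  have := congrArg (· 0) (hS.repr_mul_x s)
  simp [h, repr_one, Finsupp.mapDomain_of_notMem_range] at this

theorem repr_mul (s t : S) (j : ℕ) :
    hS.repr (s * t) j = (hS.repr s).sum fun i r => r * hS.repr (x ^ i * t) j := by
  conv_lhs => rw [← hS.repr.symm_apply_apply s, repr_symm_apply, Finsupp.sum_mul,
    map_finsuppSum, Finsupp.sum_apply]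
  simp only [mul_assoc, repr_f_mul, Finsupp.smul_apply, smul_eq_mul]

theorem repr_mul_of_forall_lt {s : S} {n : ℕ} (hs : ∀ i, n < i → hS.repr s i = 0) (t : S)
    (j : ℕ) : hS.repr (s * t) j = ∑ i ∈ range (n + 1), hS.repr s i * hS.repr (x ^ i * t) j := by
  rw [repr_mul, Finsupp.sum_of_support_subset _ _ _ (fun i _ => zero_mul _)]
  intro i hi
  by_contra h
  exact Finsupp.mem_support_iff.mp hi (hs i (by simpa using h))

theorem exists_minimal_degree (I : TwoSidedIdeal S) (hI : I ≠ ⊥) :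
    ∃ n, ∃ s ∈ I, hS.repr s n ≠ 0 ∧ (∀ i, n < i → hS.repr s i = 0) ∧
      ∀ t ∈ I, (∀ i, n ≤ i → hS.repr t i = 0) → t = 0 := by
  classical
  have hex : ∃ n, ∃ s ∈ I, hS.repr s n ≠ 0 ∧ ∀ i, n < i → hS.repr s i = 0 := by
    obtain ⟨s, hs, hs0⟩ := SetLike.exists_of_lt (bot_lt_iff_ne_bot.mpr hI)
    obtain ⟨n, hn, htop⟩ := (hS.repr s).exists_apply_ne_zero_forall_lt (by simpa using hs0)
    exact ⟨n, s, hs, hn, htop⟩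
  obtain ⟨s, hs, hn, htop⟩ := Nat.find_spec hex
  refine ⟨Nat.find hex, s, hs, hn, htop, fun t ht hlow => ?_⟩
  by_contra ht0
  obtain ⟨k, hk, hktop⟩ := (hS.repr t).exists_apply_ne_zero_forall_lt (by simpa using ht0)
  exact Nat.find_min hex (lt_of_not_ge fun h => hk (hlow k h)) ⟨t, ht, hk, hktop⟩

theorem exists_degree_succ_of_notMem_range {s : S} (hs : s ∉ f.range) :
    ∃ n, hS.repr s (n + 1) ≠ 0 ∧ ∀ i, n + 1 < i → hS.repr s i = 0 := by
  obtain ⟨n, hn, htop⟩ := (hS.repr s).exists_apply_ne_zero_forall_lt fun h =>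
    hs ⟨0, by rw [map_zero, eq_comm, ← hS.repr.map_eq_zero_iff, h]⟩
  cases n with
  | zero => exact absurd ⟨_, hS.f_repr_apply_zero htop⟩ hs
  | succ n => exact ⟨n, hn, htop⟩

end Coordinates

section Differential

variable {R S : Type*} [Ring R] [Ring S] {δ : R → R} {f : R →+* S} {x : S}
  (hS : IsOreExtension (RingHom.id R) δ f x)

theorem x_mul_eq (s : S) :
    x * s = s * x + hS.repr.symm ((hS.repr s).mapRange δ hS.delta_zero) := by
  obtain ⟨a, rfl⟩ := hS.repr.symm.surjective s
  rw [AddEquiv.apply_symm_apply, repr_symm_apply, repr_symm_apply, Finsupp.mul_sum,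
    Finsupp.sum_mul, Finsupp.sum_mapRange_index (by simp), ← Finsupp.sum_add]
  refine Finsupp.sum_congr fun i _ => ?_
  rw [← mul_assoc, hS.rel, RingHom.id_apply, add_mul, mul_assoc, mul_assoc, ← pow_succ',
    pow_succ]

theorem repr_x_mul_sub_mul_x (s : S) :
    hS.repr (x * s - s * x) = (hS.repr s).mapRange δ hS.delta_zero := by
  rw [hS.x_mul_eq s, add_sub_cancel_left, AddEquiv.apply_symm_apply]

include hS in
theorem x_pow_mul (m : ℕ) (r : R) :
    x ^ m * f r = ∑ p ∈ antidiagonal m, m.choose p.1 • (f (δ^[p.1] r) * x ^ p.2) := by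
  induction m with
  | zero => simp
  | succ m ih =>
    rw [sum_antidiagonal_choose_succ_nsmul (fun i j => f (δ^[i] r) * x ^ j), pow_succ',
      mul_assoc, ih, mul_sum, ← sum_add_distrib]
    refine sum_congr rfl fun p hp => ?_
    rw [← Nat.choose_symm_of_eq_add (mem_antidiagonal.mp hp).symm, mul_smul_comm, ← mul_assoc,
      hS.rel, RingHom.id_apply, add_mul, mul_assoc, ← pow_succ', smul_add,
      Function.iterate_succ_apply']

theorem repr_x_pow_mul_apply {m j k : ℕ} (h : k + j = m) (r : R) :
    hS.repr (x ^ m * f r) j = m.choose k • δ^[k] r := by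
  rw [hS.x_pow_mul, map_sum, Finsupp.finsetSum_apply,
    sum_eq_single_of_mem (k, j) (mem_antidiagonal.mpr h)]
  · rw [map_nsmul, hS.repr_f_mul_x_pow, Finsupp.smul_apply, Finsupp.single_eq_same]
  · rintro ⟨k', j'⟩ hp hne
    have hj : j' ≠ j := fun hj => hne (by subst hj; ext <;> simp at hp ⊢; omega)
    rw [map_nsmul, hS.repr_f_mul_x_pow, Finsupp.smul_apply, Finsupp.single_eq_of_ne' hj,
      smul_zero]

theorem repr_x_pow_mul_apply_of_lt {m j : ℕ} (h : m < j) (r : R) :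
    hS.repr (x ^ m * f r) j = 0 := by
  rw [hS.x_pow_mul, map_sum, Finsupp.finsetSum_apply]
  refine sum_eq_zero fun p hp => ?_
  have hj : p.2 ≠ j := by have := mem_antidiagonal.mp hp; omega
  rw [map_nsmul, hS.repr_f_mul_x_pow, Finsupp.smul_apply, Finsupp.single_eq_of_ne' hj,
    smul_zero]

theorem repr_mul_f_apply_of_lt {s : S} {n : ℕ} (hs : ∀ i, n < i → hS.repr s i = 0) (r : R) {j : ℕ}
    (hj : n < j) : hS.repr (s * f r) j = 0 := by
  rw [hS.repr_mul_of_forall_lt hs]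
  refine sum_eq_zero fun i hi => ?_
  rw [hS.repr_x_pow_mul_apply_of_lt (by simp at hi; omega), mul_zero]

theorem repr_mul_f_apply_self {s : S} {n : ℕ} (hs : ∀ i, n < i → hS.repr s i = 0) (r : R) :
    hS.repr (s * f r) n = hS.repr s n * r := by
  rw [hS.repr_mul_of_forall_lt hs, sum_range_succ, hS.repr_x_pow_mul_apply (zero_add n),
    sum_eq_zero fun i hi => by rw [hS.repr_x_pow_mul_apply_of_lt (by simpa using hi), mul_zero]]
  simp

theorem repr_mul_f_apply_pred {s : S} {n : ℕ} (hs : ∀ i, n + 1 < i → hS.repr s i = 0) (r : R) :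
    hS.repr (s * f r) n = hS.repr s n * r + hS.repr s (n + 1) * ((n + 1) • δ r) := by
  rw [hS.repr_mul_of_forall_lt hs, sum_range_succ, sum_range_succ,
    hS.repr_x_pow_mul_apply (zero_add n), hS.repr_x_pow_mul_apply (add_comm 1 n),
    sum_eq_zero fun i hi => by rw [hS.repr_x_pow_mul_apply_of_lt (by simpa using hi), mul_zero]]
  simp

theorem repr_x_pow_mul_mem {J : TwoSidedIdeal R} (hJ : ∀ a ∈ J, δ a ∈ J) {t : S}
    (ht : ∀ i, hS.repr t i ∈ J) (k j : ℕ) : hS.repr (x ^ k * t) j ∈ J := by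
  induction k generalizing j with
  | zero => simp [ht j]
  | succ k ih =>
    rw [pow_succ', mul_assoc, hS.x_mul_eq, map_add, AddEquiv.apply_symm_apply,
      Finsupp.add_apply, Finsupp.mapRange_apply, repr_mul_x]
    refine J.add_mem ?_ (hJ _ (ih j))
    cases j with
    | zero => simp [Finsupp.mapDomain_of_notMem_range]
    | succ j => simpa [Finsupp.mapDomain_apply Nat.succ_injective] using ih j

def coeffIdeal (J : TwoSidedIdeal R) (hJ : ∀ a ∈ J, δ a ∈ J) : TwoSidedIdeal S :=
  .mk' {s | ∀ i, hS.repr s i ∈ J} (fun _ => by simp)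
    (fun ha hb i => by simpa using J.add_mem (ha i) (hb i))
    (fun ha i => by simpa using J.neg_mem (ha i))
    (fun hb j => by
      rw [repr_mul]
      exact sum_mem fun i _ => J.mul_mem_left _ _ (hS.repr_x_pow_mul_mem hJ hb i j))
    (fun ha j => by
      rw [repr_mul]
      exact sum_mem fun i _ => J.mul_mem_right _ _ (ha i))

theorem mem_coeffIdeal {J : TwoSidedIdeal R} (hJ : ∀ a ∈ J, δ a ∈ J) (s : S) :
    s ∈ hS.coeffIdeal J hJ ↔ ∀ i, hS.repr s i ∈ J :=
  TwoSidedIdeal.mem_mk' ..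

include hS in
theorem isDeltaSimple_of_isSimpleRing [IsSimpleRing S] : IsDeltaSimple δ := by
  intro J hJ
  refine or_iff_not_imp_left.mpr fun hJ0 => ?_
  obtain ⟨r, hr, hr0⟩ := SetLike.exists_of_lt (bot_lt_iff_ne_bot.mpr hJ0)
  have hfr : f r ∈ hS.coeffIdeal J hJ := (hS.mem_coeffIdeal hJ _).mpr fun i => by
    rw [repr_f, Finsupp.single_apply]
    split_ifs
    exacts [hr, J.zero_mem]
  have h1 := IsSimpleRing.one_mem_of_ne_zero_mem _
    (fun h => hr0 (hS.f_injective (h.trans f.map_zero.symm))) hfr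
  rw [← J.one_mem_iff]
  simpa [repr_one] using (hS.mem_coeffIdeal hJ 1).mp h1 0

include hS in
theorem not_isSimpleRing_of_delta_eq_zero [Nontrivial R] (hδ : ∀ r, δ r = 0) :
    ¬ IsSimpleRing S := by
  intro _
  have hx : x ∈ Subring.center S := Subring.mem_center_iff.mpr fun s => by
    have h : hS.repr (x * s - s * x) = 0 := by
      rw [repr_x_mul_sub_mul_x]
      ext i
      simp [hδ]
    exact (sub_eq_zero.mp (hS.repr.map_eq_zero_iff.mp h)).symm
  obtain ⟨y, hy⟩ := (IsSimpleRing.isField_center S).mul_inv_cancel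
    (a := ⟨x, hx⟩) fun h => hS.x_ne_zero (congrArg Subtype.val h)
  exact hS.mul_x_ne_one y (by rw [Subring.mem_center_iff.mp hx]; exact congrArg Subtype.val hy)

def leadingCoeffIdeal (I : TwoSidedIdeal S) (n : ℕ) : TwoSidedIdeal R :=
  .mk' {r | ∃ t ∈ I, (∀ i, n < i → hS.repr t i = 0) ∧ hS.repr t n = r}
    ⟨0, I.zero_mem, by simp, by simp⟩
    (by
      rintro _ _ ⟨t, ht, htop, rfl⟩ ⟨t', ht', htop', rfl⟩
      exact ⟨t + t', I.add_mem ht ht', fun i hi => by simp [htop i hi, htop' i hi], by simp⟩)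
    (by
      rintro _ ⟨t, ht, htop, rfl⟩
      exact ⟨-t, I.neg_mem ht, fun i hi => by simp [htop i hi], by simp⟩)
    (by
      rintro r _ ⟨t, ht, htop, rfl⟩
      exact ⟨f r * t, I.mul_mem_left _ _ ht, fun i hi => by simp [repr_f_mul, htop i hi],
        by simp [repr_f_mul]⟩)
    (by
      rintro _ r ⟨t, ht, htop, rfl⟩
      exact ⟨t * f r, I.mul_mem_right _ _ ht, fun i hi => hS.repr_mul_f_apply_of_lt htop r hi,
        hS.repr_mul_f_apply_self htop r⟩)

theorem mem_leadingCoeffIdeal (I : TwoSidedIdeal S) (n : ℕ) (r : R) :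
    r ∈ hS.leadingCoeffIdeal I n ↔
      ∃ t ∈ I, (∀ i, n < i → hS.repr t i = 0) ∧ hS.repr t n = r :=
  TwoSidedIdeal.mem_mk' ..

theorem delta_mem_leadingCoeffIdeal (I : TwoSidedIdeal S) (n : ℕ) :
    ∀ r ∈ hS.leadingCoeffIdeal I n, δ r ∈ hS.leadingCoeffIdeal I n := by
  simp only [mem_leadingCoeffIdeal]
  rintro _ ⟨t, ht, htop, rfl⟩
  refine ⟨x * t - t * x, I.sub_mem (I.mul_mem_left _ _ ht) (I.mul_mem_right _ _ ht),
    fun i hi => ?_, ?_⟩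
  all_goals rw [repr_x_mul_sub_mul_x, Finsupp.mapRange_apply]
  rw [htop i hi, hS.delta_zero]

include hS in
theorem isSimpleRing_of_isDeltaSimple [Nontrivial R] (hδ : IsDeltaSimple δ)
    (hc : Subring.centralizer (Set.range f) = f.range) : IsSimpleRing S := by
  have : Nontrivial S := hS.f_injective.nontrivial
  refine .of_eq_bot_or_eq_top fun I => or_iff_not_imp_left.mpr fun hI => ?_
  obtain ⟨n, s, hs, hsn, hstop, hmin⟩ := hS.exists_minimal_degree I hI
  have hJ : hS.leadingCoeffIdeal I n = ⊤ := by
    refine (hδ _ (hS.delta_mem_leadingCoeffIdeal I n)).resolve_left fun hJ => hsn ?_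
    have := (hS.mem_leadingCoeffIdeal I n _).mpr ⟨s, hs, hstop, rfl⟩
    rwa [hJ, TwoSidedIdeal.mem_bot] at this
  obtain ⟨u, hu, hutop, hun⟩ :=
    (hS.mem_leadingCoeffIdeal I n 1).mp (hJ ▸ TwoSidedIdeal.mem_top _)
  have hcomm (r : R) : f r * u = u * f r := by
    refine sub_eq_zero.mp (hmin _ (I.sub_mem (I.mul_mem_left _ _ hu) (I.mul_mem_right _ _ hu))
      fun i hi => ?_)
    rw [map_sub, Finsupp.sub_apply, repr_f_mul, Finsupp.smul_apply, smul_eq_mul]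
    rcases hi.eq_or_lt with rfl | hi
    · rw [hS.repr_mul_f_apply_self hutop, hun, mul_one, one_mul, sub_self]
    · rw [hutop i hi, hS.repr_mul_f_apply_of_lt hutop r hi, mul_zero, sub_zero]
  obtain ⟨c, rfl⟩ : u ∈ f.range := hc ▸ Subring.mem_centralizer_iff.mpr (by
    rintro _ ⟨r, rfl⟩
    exact hcomm r)
  rw [repr_f, Finsupp.single_apply] at hun
  split_ifs at hun
  · rw [← I.one_mem_iff, ← f.map_one, ← hun]
    exact hu
  · exact absurd hun zero_ne_one

end Differential

section Commutative

variable {R S : Type*} [CommRing R] [IsDomain R] [CharZero R] [Ring S] {δ : R → R}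
  {f : R →+* S} {x : S} (hS : IsOreExtension (RingHom.id R) δ f x)

include hS in
theorem delta_eq_zero_of_forall_commute {s : S} (hs : ∀ r, f r * s = s * f r) {n : ℕ}
    (hn : hS.repr s (n + 1) ≠ 0) (htop : ∀ i, n + 1 < i → hS.repr s i = 0) (r : R) :
    δ r = 0 := by
  have h := congrArg (hS.repr · n) (hs r)
  simp only [repr_f_mul, Finsupp.smul_apply, smul_eq_mul, hS.repr_mul_f_apply_pred htop,
    mul_comm r, left_eq_add, nsmul_eq_mul, mul_eq_zero, hn, Nat.cast_eq_zero,
    Nat.add_one_ne_zero, false_or] at h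
  exact h

include hS in
theorem centralizer_range_eq_range [IsSimpleRing S] :
    Subring.centralizer (Set.range f) = f.range := by
  refine le_antisymm (fun s hs => ?_) ?_
  · by_contra hs'
    obtain ⟨n, hn, htop⟩ := hS.exists_degree_succ_of_notMem_range hs'
    have hcomm (r : R) : f r * s = s * f r := Subring.mem_centralizer_iff.mp hs _ ⟨r, rfl⟩
    exact hS.not_isSimpleRing_of_delta_eq_zero
      (hS.delta_eq_zero_of_forall_commute hcomm hn htop) ‹_›
  · rintro _ ⟨r, rfl⟩ _ ⟨t, rfl⟩
    rw [← map_mul, ← map_mul, mul_comm]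

end Commutative

end IsOreExtension

open IsOreExtension in
theorem stmt_19_general {R S : Type*} [CommRing R] [IsDomain R] [CharZero R] [Ring S] (δ : R → R)
    (f : R →+* S) (x : S)
    (hS : IsOreExtension (RingHom.id R) δ f x) :
    IsSimpleRing S ↔
      IsDeltaSimple δ ∧ Subring.centralizer (Set.range f) = f.range :=
  ⟨fun _ => ⟨hS.isDeltaSimple_of_isSimpleRing, hS.centralizer_range_eq_range⟩,
    fun ⟨hδ, hc⟩ => hS.isSimpleRing_of_isDeltaSimple hδ hc⟩

/-- For a commutative domain `R` of characteristic zero, `R[x;id,δ]` is simple if and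
only if `R` is `δ`-simple and a maximal commutative subring of `R[x;id,δ]`. -/
theorem stmt_19 {R S : Type*} [CommRing R] [IsDomain R] [CharZero R] [Ring S] (δ : R → R)
    (hδ : IsSigmaDerivation (RingHom.id R) δ) (f : R →+* S) (x : S)
    (hS : IsOreExtension (RingHom.id R) δ f x) :
    IsSimpleRing S ↔
      IsDeltaSimple δ ∧ Subring.centralizer (Set.range f) = f.range :=
  stmt_19_general δ f x hS
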